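/- arXiv:1502.00966 — 4 statements merged into one kernel-verified Lean document; each statement's English description precedes it below -/
import Mathlib

section
/- Let d ≥ 2 and let ξ ∈ ℤ^d be nonzero. Then there exist vectors f¹,…,f^{d−1} ∈ ℤ^d such that f^j · ξ = 0 and ‖f^j‖ ≤ ‖ξ‖ for each j, and f¹,…,f^{d−1} are linearly independent over ℝ; hence they span the hyperplane ξ^⊥ = {x ∈ ℝ^d : x·ξ = 0} over ℝ. -/
/-!
Choose a coordinate `i₀` with `ξ i₀ ≠ 0`. For `i ≠ i₀` the integer vectors
`ξ i₀ • e i - ξ i • e i₀` are orthogonal to `ξ` and have norm `√(ξ i₀² + ξ i²) ≤ ‖ξ‖`.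
Away from the coordinate `i₀` they are `ξ i₀` times the standard basis, so these `d - 1`
vectors are linearly independent, and they span the hyperplane `ξᗮ` by a dimension count.
-/

/-- The Euclidean norm of an integer vector. -/
noncomputable def enormZ {d : ℕ} (ξ : Fin d → ℤ) : ℝ :=
  Real.sqrt (∑ i, ((ξ i : ℝ)) ^ 2)

open Module Submodule

theorem Submodule.span_range_eq_of_finrank_eq_card_add_one {K V κ : Type*} [DivisionRing K]
    [AddCommGroup V] [Module K V] [FiniteDimensional K V] [Fintype κ] {v : κ → V}
    (hv : LinearIndependent K v) {W : Submodule K V} (hvW : ∀ k, v k ∈ W) (hW : W ≠ ⊤)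
    (hcard : finrank K V = Fintype.card κ + 1) : span K (Set.range v) = W := by
  refine eq_of_le_of_finrank_le (span_le.2 (Set.range_subset_iff.2 hvW)) ?_
  have := Submodule.finrank_lt hW
  rw [finrank_span_eq_card hv]
  omega

section planePerp

variable {ι R : Type*} [DecidableEq ι]

def planePerp [CommRing R] (ξ : ι → R) (i₀ i : ι) : ι → R :=
  Pi.single i (ξ i₀) - Pi.single i₀ (ξ i)

theorem map_planePerp {S : Type*} [CommRing R] [CommRing S] (φ : R →+* S) (ξ : ι → R)
    (i₀ i : ι) : (fun k => φ (planePerp ξ i₀ i k)) = planePerp (fun k => φ (ξ k)) i₀ i := by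
  ext k
  simp only [planePerp, Pi.sub_apply, Pi.single_apply, map_sub]
  split_ifs <;> simp

theorem linearIndependent_planePerp [CommRing R] [IsDomain R] {ξ : ι → R} {i₀ : ι}
    (h₀ : ξ i₀ ≠ 0) : LinearIndependent R fun i : {i // i ≠ i₀} => planePerp ξ i₀ i := by
  apply LinearIndependent.of_comp (LinearMap.funLeft R R (Subtype.val : {i // i ≠ i₀} → ι))
  have hrestrict :
      (LinearMap.funLeft R R Subtype.val ∘ fun i : {i // i ≠ i₀} => planePerp ξ i₀ i) =
        fun i => Pi.single i (ξ i₀) := by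
    ext i k
    simp [planePerp, LinearMap.funLeft, Pi.single_apply, k.2, Subtype.ext_iff]
  rw [hrestrict]
  exact Pi.linearIndependent_single_of_ne_zero fun _ => h₀

variable [Fintype ι]

theorem planePerp_dotProduct [CommRing R] (ξ : ι → R) (i₀ i : ι) :
    planePerp ξ i₀ i ⬝ᵥ ξ = 0 := by
  simp [planePerp, sub_dotProduct, mul_comm]

theorem sum_sq_planePerp_le [CommRing R] [LinearOrder R] [IsStrictOrderedRing R]
    (ξ : ι → R) {i₀ i : ι} (hi : i ≠ i₀) :
    ∑ k, planePerp ξ i₀ i k ^ 2 ≤ ∑ k, ξ k ^ 2 := by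
  rw [Fintype.sum_eq_add i i₀ hi (fun k hk => by simp [planePerp, hk.1, hk.2])]
  simp only [planePerp, Pi.sub_apply, Pi.single_eq_same, Pi.single_eq_of_ne hi,
    Pi.single_eq_of_ne hi.symm, sub_zero, zero_sub, neg_sq]
  rw [← Finset.sum_pair (f := fun k => ξ k ^ 2) hi.symm]
  exact Finset.sum_le_sum_of_subset_of_nonneg (Finset.subset_univ _) fun k _ _ => sq_nonneg _

theorem enormZ_planePerp_le {d : ℕ} (ξ : Fin d → ℤ) {i₀ i : Fin d} (hi : i ≠ i₀) :
    enormZ (planePerp ξ i₀ i) ≤ enormZ ξ :=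
  Real.sqrt_le_sqrt (by exact_mod_cast sum_sq_planePerp_le ξ hi)

theorem span_planePerp [Field R] {ξ : ι → R} {i₀ : ι} (h₀ : ξ i₀ ≠ 0) :
    span R (Set.range fun i : {i // i ≠ i₀} => planePerp ξ i₀ i) =
      LinearMap.ker (dotProductEquiv R ι ξ) := by
  refine span_range_eq_of_finrank_eq_card_add_one (linearIndependent_planePerp h₀)
    (fun i => by simpa [dotProduct_comm ξ] using planePerp_dotProduct ξ i₀ i) ?_ ?_
  · rw [Ne, LinearMap.ker_eq_top]
    intro h
    simpa [h₀] using LinearMap.congr_fun h (Pi.single i₀ 1)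
  · rw [finrank_fintype_fun_eq_card, Fintype.card_subtype_compl, Fintype.card_subtype_eq]
    have := Fintype.card_pos_iff.2 ⟨i₀⟩
    omega

end planePerp

theorem lattice_basis_of_orthogonal_hyperplane_general (d : ℕ)
    (ξ : Fin d → ℤ) (hξ : ξ ≠ 0) :
    ∃ f : Fin (d - 1) → (Fin d → ℤ),
      (∀ j, ∑ i, f j i * ξ i = 0) ∧
      (∀ j, enormZ (f j) ≤ enormZ ξ) ∧
      LinearIndependent ℝ (fun j => fun i => (f j i : ℝ)) ∧
      (Submodule.span ℝ (Set.range fun j => fun i => (f j i : ℝ)) : Set (Fin d → ℝ)) =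
        {x : Fin d → ℝ | ∑ i, x i * (ξ i : ℝ) = 0} := by
  obtain ⟨i₀, h₀⟩ := Function.ne_iff.1 hξ
  set ξℝ : Fin d → ℝ := fun i => ξ i
  have h₀' : ξℝ i₀ ≠ 0 := by simpa [ξℝ] using h₀
  let σ : Fin (d - 1) ≃ {i // i ≠ i₀} :=
    (Fintype.equivFinOfCardEq (by simp [Fintype.card_subtype_compl])).symm
  have hcast :
      (fun j i => ((planePerp ξ i₀ (σ j) i : ℤ) : ℝ)) = fun j => planePerp ξℝ i₀ (σ j) :=
    funext fun j => map_planePerp (Int.castRingHom ℝ) ξ i₀ (σ j)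
  refine ⟨fun j => planePerp ξ i₀ (σ j), fun j => planePerp_dotProduct ξ i₀ _,
    fun j => enormZ_planePerp_le ξ (σ j).2, ?_, ?_⟩
  · rw [hcast]
    exact (linearIndependent_equiv σ).2 (linearIndependent_planePerp h₀')
  · have hrange : Set.range (fun j => planePerp ξℝ i₀ (σ j)) =
        Set.range fun i : {i // i ≠ i₀} => planePerp ξℝ i₀ i :=
      σ.surjective.range_comp fun i => planePerp ξℝ i₀ i
    rw [hcast, hrange, span_planePerp h₀']
    ext x
    simp [ξℝ, dotProduct, mul_comm]

theorem lattice_basis_of_orthogonal_hyperplane (d : ℕ) (hd : 2 ≤ d)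
    (ξ : Fin d → ℤ) (hξ : ξ ≠ 0) :
    ∃ f : Fin (d - 1) → (Fin d → ℤ),
      (∀ j, ∑ i, f j i * ξ i = 0) ∧
      (∀ j, enormZ (f j) ≤ enormZ ξ) ∧
      LinearIndependent ℝ (fun j => fun i => (f j i : ℝ)) ∧
      (Submodule.span ℝ (Set.range fun j => fun i => (f j i : ℝ)) : Set (Fin d → ℝ)) =
        {x : Fin d → ℝ | ∑ i, x i * (ξ i : ℝ) = 0} :=
  lattice_basis_of_orthogonal_hyperplane_general d ξ hξ
end

section
/- Let d ≥ 2, Λ ≥ 1 and β ∈ (0,1). There exists C > 0 depending only on d, Λ and β with the following property. Let K ⊆ ℝ^d be an open set with 0 ∈ ∂K and B₁ ∩ K ⊆ {x ∈ ℝ^d : x_d > 0}, where B₁ is the open unit ball. Let u be continuous on the closure of B₁ ∩ K and twice continuously differentiable on B₁ ∩ K, with u(x) ≤ 1 for all x ∈ B₁ ∩ K, P⁺_{1,Λ}(D²u(x)) ≥ 0 for all x ∈ B₁ ∩ K (i.e. u is a classical subsolution of −P⁺_{1,Λ}(D²u) ≤ 0), and u(x) ≤ ‖x‖^β for all x in the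 topological boundary ∂(B₁ ∩ K). Then u(x) ≤ C·‖x‖^β for all x ∈ B₁ ∩ K. -/
open Matrix

/-- Pucci maximal operator: `Λ·Σ_{eᵢ>0} eᵢ + λ·Σ_{eᵢ<0} eᵢ` over the eigenvalues of a
symmetric matrix (junk value `0` on non-symmetric matrices). -/
noncomputable def pucciPlus {d : ℕ} (lam Lam : ℝ) (M : Matrix (Fin d) (Fin d) ℝ) : ℝ :=
  if h : M.IsHermitian then
    ∑ i, (Lam * max (h.eigenvalues i) 0 + lam * min (h.eigenvalues i) 0)
  else 0

/-- The Hessian matrix of `f : ℝ^d → ℝ` at `y`. -/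
noncomputable def hessianE {d : ℕ} (f : EuclideanSpace ℝ (Fin d) → ℝ)
    (y : EuclideanSpace ℝ (Fin d)) : Matrix (Fin d) (Fin d) ℝ :=
  Matrix.of fun i j =>
    iteratedFDeriv ℝ 2 f y ![EuclideanSpace.single i 1, EuclideanSpace.single j 1]

/-!
In `B_r ∩ K`, which lies in the half-space `{yᵢ₀ > 0}`, the quadratic
`w = b + (m - b) (‖y‖² + A yᵢ₀ (r - yᵢ₀)) / r²` with `A = Λ d + 1` satisfies `P⁺(D²w) < 0` and
dominates `u` on the boundary as soon as `u ≤ m` on the sphere of radius `r` and `u ≤ b` on `∂K`.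
At an interior maximum of `u - w` we would have `D²u ≤ D²w`, hence `P⁺(D²u) ≤ P⁺(D²w) < 0`; so
`u ≤ w ≤ b + (m - b) (Λ d + 2) ‖y‖ / r`. With `b = r^β` and `δ` so small that
`2 (Λ d + 2) δ ≤ δ^β`, this improves `u ≤ C₀ r^β` on `B̄_r ∩ K` to `u ≤ C₀ (δ r)^β` on
`B̄_{δr} ∩ K` for `C₀ = 2 / δ^β`, and iterating from `u ≤ 1` gives the Hölder bound.
-/

open Finset Filter Topology Metric

theorem mul_le_mul_max_add_mul_min {lam Lam α x : ℝ} (hlam : lam ≤ α) (hLam : α ≤ Lam) :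
    α * x ≤ Lam * max x 0 + lam * min x 0 := by
  rcases le_total 0 x with hx | hx
  · rw [max_eq_left hx, min_eq_right hx]; nlinarith
  · rw [max_eq_right hx, min_eq_left hx]; nlinarith

theorem pucciPlus_eq_sum_mul_eigenvalues {d : ℕ} (lam Lam : ℝ) {M : Matrix (Fin d) (Fin d) ℝ}
    (hM : M.IsHermitian) :
    pucciPlus lam Lam M =
      ∑ i, (if 0 ≤ hM.eigenvalues i then Lam else lam) * hM.eigenvalues i := by
  rw [pucciPlus, dif_pos hM]
  refine sum_congr rfl fun i _ => ?_
  split_ifs with h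
  · simp [max_eq_left h, min_eq_right h]
  · simp [max_eq_right (not_le.mp h).le, min_eq_left (not_le.mp h).le]

/-- In an eigenbasis `v` of `M` we have `eᵢ ≤ ∑ⱼ Dⱼ vᵢⱼ²`, and for each `j` the weights `vᵢⱼ²`
sum to `1` over `i`. -/
theorem pucciPlus_le_of_le_diagonal {d : ℕ} {lam Lam : ℝ} (hlam : 0 ≤ lam) (hle : lam ≤ Lam)
    {M : Matrix (Fin d) (Fin d) ℝ} (hM : M.IsHermitian) {D : Fin d → ℝ}
    (hMD : ∀ ξ : Fin d → ℝ, ξ ⬝ᵥ M *ᵥ ξ ≤ ξ ⬝ᵥ diagonal D *ᵥ ξ) :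
    pucciPlus lam Lam M ≤ ∑ j, (Lam * max (D j) 0 + lam * min (D j) 0) := by
  set v := hM.eigenvectorBasis
  set a : Fin d → ℝ := fun i => if 0 ≤ hM.eigenvalues i then Lam else lam
  have ha : ∀ i, lam ≤ a i ∧ a i ≤ Lam := fun i => by
    by_cases h : 0 ≤ hM.eigenvalues i <;> simp [a, h, hle]
  have heig : ∀ i, hM.eigenvalues i ≤ ∑ j, D j * v i j ^ 2 := fun i => by
    rw [hM.eigenvalues_eq i]
    simp only [star_trivial, RCLike.re_to_real]
    convert hMD (v i) using 1
    simp only [dotProduct, mulVec_diagonal]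
    exact sum_congr rfl fun j _ => by ring
  have hcol : ∀ j, ∑ i, v i j ^ 2 = 1 := fun j => by
    simpa [EuclideanSpace.inner_single_right] using
      v.sum_sq_inner_right (EuclideanSpace.single j 1)
  calc pucciPlus lam Lam M = ∑ i, a i * hM.eigenvalues i :=
        pucciPlus_eq_sum_mul_eigenvalues _ _ hM
    _ ≤ ∑ i, a i * ∑ j, D j * v i j ^ 2 :=
        sum_le_sum fun i _ => mul_le_mul_of_nonneg_left (heig i) (hlam.trans (ha i).1)
    _ = ∑ j, (∑ i, a i * v i j ^ 2) * D j := by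
        simp only [mul_sum, sum_mul]
        rw [sum_comm]
        exact sum_congr rfl fun j _ => sum_congr rfl fun i _ => by ring
    _ ≤ ∑ j, (Lam * max (D j) 0 + lam * min (D j) 0) := by
        refine sum_le_sum fun j _ => mul_le_mul_max_add_mul_min ?_ ?_
        · calc lam = ∑ i, lam * v i j ^ 2 := by rw [← mul_sum, hcol, mul_one]
            _ ≤ _ := sum_le_sum fun i _ => mul_le_mul_of_nonneg_right (ha i).1 (sq_nonneg _)
        · calc ∑ i, a i * v i j ^ 2 ≤ ∑ i, Lam * v i j ^ 2 :=
                sum_le_sum fun i _ => mul_le_mul_of_nonneg_right (ha i).2 (sq_nonneg _)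
            _ = Lam := by rw [← mul_sum, hcol, mul_one]

theorem IsLocalMax.hasDerivAt_deriv_nonpos {f f' : ℝ → ℝ} {a c : ℝ} (hmax : IsLocalMax f a)
    (hf : ∀ᶠ t in 𝓝 a, HasDerivAt f (f' t) t) (hf' : HasDerivAt f' c a) : c ≤ 0 := by
  by_contra! hc
  have hf'a : f' a = 0 := hmax.hasDerivAt_eq_zero hf.self_of_nhds
  have hpos : ∀ᶠ t in 𝓝[>] a, 0 < f' t := by
    filter_upwards [nhdsGT_le_nhdsNE a ((hasDerivAt_iff_tendsto_slope.mp hf').eventually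
      (eventually_gt_nhds hc)), self_mem_nhdsWithin] with t ht (hat : a < t)
    rw [slope_def_field, hf'a, sub_zero] at ht
    exact (div_pos_iff_of_pos_right (sub_pos.mpr hat)).mp ht
  obtain ⟨b, hab, hb⟩ := (nhdsGT_basis a).eventually_iff.mp
    (hpos.and (nhdsWithin_le_nhds (hf.and hmax)))
  have ham : a < (a + b) / 2 := by linarith
  have hmb : (a + b) / 2 < b := by linarith
  have hderiv : ∀ t ∈ Set.Icc a ((a + b) / 2), HasDerivAt f (f' t) t := fun t ht => by
    rcases ht.1.eq_or_lt with rfl | hat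
    · exact hf.self_of_nhds
    · exact (hb ⟨hat, ht.2.trans_lt hmb⟩).2.1
  obtain ⟨σ, hσ, hslope⟩ := exists_hasDerivAt_eq_slope f f' ham
    (fun t ht => (hderiv t ht).continuousAt.continuousWithinAt)
    (fun t ht => hderiv t (Set.Ioo_subset_Icc_self ht))
  have hσpos : 0 < f' σ := (hb ⟨hσ.1, hσ.2.trans hmb⟩).1
  have hle : f ((a + b) / 2) ≤ f a := (hb ⟨ham, hmb⟩).2.2
  rw [hslope] at hσpos
  exact (div_pos_iff_of_pos_right (sub_pos.mpr ham)).mp hσpos |>.not_ge (sub_nonpos.mpr hle)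

section LineRestriction

variable {E : Type*} [NormedAddCommGroup E] [NormedSpace ℝ E] {u : E → ℝ} {x : E}

theorem ContDiffAt.eventually_hasDerivAt_comp_add_smul (hu : ContDiffAt ℝ 2 u x) (ξ : E) :
    ∀ᶠ t in 𝓝 (0 : ℝ),
      HasDerivAt (fun s : ℝ => u (x + s • ξ)) (fderiv ℝ u (x + t • ξ) ξ) t := by
  have hline : Tendsto (fun t : ℝ => x + t • ξ) (𝓝 0) (𝓝 x) := by
    simpa using (Continuous.tendsto (by fun_prop) (0 : ℝ) :
      Tendsto (fun t : ℝ => x + t • ξ) _ _)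
  filter_upwards [hline.eventually (hu.eventually (by simp))] with t ht
  exact (ht.differentiableAt two_ne_zero).hasFDerivAt.comp_hasDerivAt t
    (by simpa using ((hasDerivAt_id t).smul_const ξ).const_add x)

theorem ContDiffAt.hasDerivAt_fderiv_comp_add_smul (hu : ContDiffAt ℝ 2 u x) (ξ : E) :
    HasDerivAt (fun t : ℝ => fderiv ℝ u (x + t • ξ) ξ) (fderiv ℝ (fderiv ℝ u) x ξ ξ) 0 := by
  have hD : DifferentiableAt ℝ (fderiv ℝ u) x :=
    (hu.fderiv_right (by norm_num)).differentiableAt one_ne_zero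
  have hline : HasDerivAt (fun t : ℝ => x + t • ξ) ξ 0 := by
    simpa using ((hasDerivAt_id (0 : ℝ)).smul_const ξ).const_add x
  simpa using (hD.hasFDerivAt.comp_hasDerivAt_of_eq 0 hline (by simp)).clm_apply
    (hasDerivAt_const 0 ξ)

theorem ContDiffAt.fderiv_fderiv_le_of_isLocalMax_sub {w : E → ℝ} {ξ : E} {a c : ℝ}
    (hu : ContDiffAt ℝ 2 u x) (hmax : IsLocalMax (fun y => u y - w y) x)
    (hw : ∀ t : ℝ, w (x + t • ξ) = w x + a * t + c * t ^ 2) :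
    fderiv ℝ (fderiv ℝ u) x ξ ξ ≤ 2 * c := by
  have hpoly : ∀ t : ℝ, HasDerivAt (fun s : ℝ => w (x + s • ξ)) (a + 2 * c * t) t := fun t => by
    rw [funext hw]
    exact ((((hasDerivAt_id t).const_mul a).const_add (w x)).add
      ((hasDerivAt_pow 2 t).const_mul c)).congr_deriv (by simp; ring)
  have hmax' : IsLocalMax (fun t : ℝ => u (x + t • ξ) - w (x + t • ξ)) 0 :=
    IsLocalMax.comp_continuous (f := fun y => u y - w y) (g := fun t : ℝ => x + t • ξ)
      (b := 0) (by simpa using hmax) (by fun_prop)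
  have := hmax'.hasDerivAt_deriv_nonpos
    ((hu.eventually_hasDerivAt_comp_add_smul ξ).mono fun t ht => ht.sub (hpoly t))
    ((hu.hasDerivAt_fderiv_comp_add_smul ξ).sub
      (by simpa using ((hasDerivAt_id (0 : ℝ)).const_mul (2 * c)).const_add a))
  linarith

end LineRestriction

section Hessian

variable {d : ℕ} {u : EuclideanSpace ℝ (Fin d) → ℝ} {y : EuclideanSpace ℝ (Fin d)}

theorem hessianE_apply (i j : Fin d) :
    hessianE u y i j =
      fderiv ℝ (fderiv ℝ u) y (EuclideanSpace.single i 1) (EuclideanSpace.single j 1) := by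
  simp [hessianE, iteratedFDeriv_two_apply]

theorem ContDiffAt.isHermitian_hessianE (hu : ContDiffAt ℝ 2 u y) :
    (hessianE u y).IsHermitian :=
  Matrix.IsHermitian.ext fun i j => by
    simpa [hessianE_apply] using (hu.isSymmSndFDerivAt (by simp) _ _).symm

theorem dotProduct_hessianE_mulVec (ξ : Fin d → ℝ) :
    ξ ⬝ᵥ hessianE u y *ᵥ ξ =
      fderiv ℝ (fderiv ℝ u) y (WithLp.toLp 2 ξ) (WithLp.toLp 2 ξ) := by
  have hξ : WithLp.toLp 2 ξ = ∑ i, ξ i • EuclideanSpace.single i (1 : ℝ) := by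
    ext j; simp [Pi.single_apply]
  rw [hξ]
  simp only [dotProduct, mulVec, hessianE_apply, map_sum, map_smul, FunLike.coe_sum,
    Finset.sum_apply, FunLike.coe_smul, Pi.smul_apply, smul_eq_mul, mul_sum]
  rw [sum_comm]
  exact sum_congr rfl fun _ _ => sum_congr rfl fun _ _ => by ring

end Hessian

theorem IsOpen.nonpos_of_nonpos_on_frontier {X : Type*} [PseudoMetricSpace X] [ProperSpace X]
    {Ω : Set X} (hΩ : IsOpen Ω) (hbdd : Bornology.IsBounded Ω) {f : X → ℝ}
    (hf : ContinuousOn f (closure Ω)) (hloc : ∀ x ∈ Ω, ¬IsLocalMax f x)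
    (hfr : ∀ y ∈ frontier Ω, f y ≤ 0) : ∀ y ∈ Ω, f y ≤ 0 := by
  intro y hy
  obtain ⟨x, hx, hmax⟩ := hbdd.isCompact_closure.exists_isMaxOn ⟨y, subset_closure hy⟩ hf
  have hxΩ : x ∉ Ω := fun hxΩ =>
    hloc x hxΩ (hmax.isLocalMax (mem_of_superset (hΩ.mem_nhds hxΩ) subset_closure))
  exact (hmax (subset_closure hy)).trans (hfr x (hΩ.frontier_eq ▸ ⟨hx, hxΩ⟩))

theorem frontier_ball_inter_subset {X : Type*} [PseudoMetricSpace X] {K : Set X} (hK : IsOpen K)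
    {x : X} {r R : ℝ} (hrR : r ≤ R) :
    frontier (ball x r ∩ K) ⊆ sphere x r ∩ K ∪ frontier (ball x R ∩ K) ∩ closedBall x r := by
  intro y hy
  rw [(isOpen_ball.inter hK).frontier_eq] at hy
  have hyr : y ∈ closedBall x r :=
    closure_ball_subset_closedBall (closure_mono Set.inter_subset_left hy.1)
  by_cases hyK : y ∈ K
  · exact Or.inl ⟨le_antisymm hyr (not_lt.mp fun h => hy.2 ⟨h, hyK⟩), hyK⟩
  · refine Or.inr ⟨?_, hyr⟩
    rw [(isOpen_ball.inter hK).frontier_eq]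
    exact ⟨closure_mono (Set.inter_subset_inter_left _ (ball_subset_ball hrR)) hy.1,
      fun h => hyK h.2⟩

structure IsPucciSubsolution {d : ℕ} (lam Lam : ℝ) (Ω : Set (EuclideanSpace ℝ (Fin d)))
    (u : EuclideanSpace ℝ (Fin d) → ℝ) : Prop where
  continuousOn : ContinuousOn u (closure Ω)
  contDiffOn : ContDiffOn ℝ 2 u Ω
  pucciPlus_nonneg : ∀ x ∈ Ω, 0 ≤ pucciPlus lam Lam (hessianE u x)

noncomputable def diagQuadratic {d : ℕ} (a : ℝ) (g h : Fin d → ℝ)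
    (y : EuclideanSpace ℝ (Fin d)) : ℝ :=
  a + ∑ i, (g i * y i + h i * y i ^ 2)

section DiagQuadratic

variable {d : ℕ} {a : ℝ} {g h : Fin d → ℝ}

theorem continuous_diagQuadratic : Continuous (diagQuadratic a g h) := by
  unfold diagQuadratic; fun_prop

theorem diagQuadratic_add_smul (x ξ : EuclideanSpace ℝ (Fin d)) (t : ℝ) :
    diagQuadratic a g h (x + t • ξ) = diagQuadratic a g h x +
      (∑ i, (g i + 2 * h i * x i) * ξ i) * t + (∑ i, h i * ξ i ^ 2) * t ^ 2 := by
  simp only [diagQuadratic, PiLp.add_apply, PiLp.smul_apply, smul_eq_mul, sum_mul]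
  rw [add_assoc, add_assoc, ← sum_add_distrib, ← sum_add_distrib]
  exact congrArg _ (sum_congr rfl fun i _ => by ring)

theorem ContDiffAt.not_isLocalMax_sub_diagQuadratic {lam Lam : ℝ} (hlam : 0 ≤ lam)
    (hle : lam ≤ Lam) {u : EuclideanSpace ℝ (Fin d) → ℝ} {x : EuclideanSpace ℝ (Fin d)}
    (hu : ContDiffAt ℝ 2 u x) (hsub : 0 ≤ pucciPlus lam Lam (hessianE u x))
    (hneg : ∑ i, (Lam * max (2 * h i) 0 + lam * min (2 * h i) 0) < 0) :
    ¬IsLocalMax (fun y => u y - diagQuadratic a g h y) x := by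
  intro hmax
  have hD : ∀ ξ : Fin d → ℝ,
      ξ ⬝ᵥ hessianE u x *ᵥ ξ ≤ ξ ⬝ᵥ diagonal (fun i => 2 * h i) *ᵥ ξ := fun ξ => by
    rw [dotProduct_hessianE_mulVec]
    refine (hu.fderiv_fderiv_le_of_isLocalMax_sub hmax
      (diagQuadratic_add_smul x _)).trans_eq ?_
    simp only [dotProduct, mulVec_diagonal, mul_sum]
    exact sum_congr rfl fun i _ => by ring
  linarith [pucciPlus_le_of_le_diagonal hlam hle hu.isHermitian_hessianE hD]

end DiagQuadratic

theorem Fin.sum_ite_eq_add_mul {d : ℕ} (i₀ : Fin d) (x y : ℝ) :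
    ∑ i, (if i = i₀ then x else y) = x + ((d : ℝ) - 1) * y := by
  rw [← add_sum_erase _ _ (mem_univ i₀), if_pos rfl,
    sum_congr rfl fun i hi => if_neg (ne_of_mem_erase hi)]
  simp [card_erase_of_mem, Nat.cast_sub (show 1 ≤ d from i₀.pos)]

theorem EuclideanSpace.apply_le_norm {d : ℕ} (y : EuclideanSpace ℝ (Fin d)) (i : Fin d) :
    y i ≤ ‖y‖ :=
  (Real.le_norm_self _).trans (PiLp.norm_apply_le y i)

theorem exists_pos_lt_one_mul_le_rpow {c β : ℝ} (hc : 0 < c) (hβ : β < 1) :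
    ∃ δ : ℝ, 0 < δ ∧ δ < 1 ∧ c * δ ≤ δ ^ β := by
  set δ := min (1 / 2) (c⁻¹ ^ (1 - β)⁻¹)
  have hδ : 0 < δ := lt_min (by norm_num) (by positivity)
  refine ⟨δ, hδ, (min_le_left _ _).trans_lt (by norm_num), ?_⟩
  have hβ' : 0 < 1 - β := sub_pos.mpr hβ
  have hsmall : δ ^ (1 - β) ≤ c⁻¹ := by
    calc δ ^ (1 - β) ≤ (c⁻¹ ^ (1 - β)⁻¹) ^ (1 - β) :=
          Real.rpow_le_rpow hδ.le (min_le_right _ _) hβ'.le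
      _ = c⁻¹ := by
          rw [← Real.rpow_mul (by positivity), inv_mul_cancel₀ hβ'.ne', Real.rpow_one]
  calc c * δ = c * δ ^ (1 - β) * δ ^ β := by
        rw [mul_assoc, ← Real.rpow_add hδ, sub_add_cancel, Real.rpow_one]
    _ ≤ c * c⁻¹ * δ ^ β := by gcongr
    _ = δ ^ β := by rw [mul_inv_cancel₀ hc.ne', one_mul]

section Barrier

variable {d : ℕ} (i₀ : Fin d) (A r : ℝ) {y : EuclideanSpace ℝ (Fin d)}

noncomputable def halfBallBarrier (y : EuclideanSpace ℝ (Fin d)) : ℝ :=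
  (‖y‖ ^ 2 + A * y i₀ * (r - y i₀)) / r ^ 2

variable {i₀ A r}

theorem diagQuadratic_eq_halfBallBarrier (hr : r ≠ 0) (a q : ℝ) (y : EuclideanSpace ℝ (Fin d)) :
    diagQuadratic a (fun i => if i = i₀ then q * A / r else 0)
      (fun i => if i = i₀ then q * (1 - A) / r ^ 2 else q / r ^ 2) y =
      a + q * halfBallBarrier i₀ A r y := by
  have hterm : ∀ i, (if i = i₀ then q * A / r else 0) * y i +
      (if i = i₀ then q * (1 - A) / r ^ 2 else q / r ^ 2) * y i ^ 2 =
      q / r ^ 2 * y i ^ 2 + if i = i₀ then q * A * y i * (r - y i) / r ^ 2 else 0 := fun i => by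
    split_ifs <;> field_simp <;> ring
  simp only [diagQuadratic, halfBallBarrier, hterm, sum_add_distrib, ← mul_sum, sum_ite_eq',
    mem_univ, if_true, EuclideanSpace.real_norm_sq_eq]
  ring

theorem halfBallBarrier_nonneg (hA : 0 ≤ A) (hy : 0 ≤ y i₀) (hyr : ‖y‖ ≤ r) :
    0 ≤ halfBallBarrier i₀ A r y := by
  have : 0 ≤ r - y i₀ := by linarith [y.apply_le_norm i₀]
  unfold halfBallBarrier; positivity

theorem one_le_halfBallBarrier (hA : 0 ≤ A) (hy : 0 ≤ y i₀) (hyr : ‖y‖ = r) (hr : r ≠ 0) :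
    1 ≤ halfBallBarrier i₀ A r y := by
  have : 0 ≤ r - y i₀ := by linarith [y.apply_le_norm i₀]
  rw [halfBallBarrier, hyr, add_div, div_self (pow_ne_zero 2 hr)]
  linarith [show 0 ≤ A * y i₀ * (r - y i₀) / r ^ 2 by positivity]

theorem halfBallBarrier_le (hA : 0 ≤ A) (hr : 0 < r) (hy : 0 ≤ y i₀) (hyr : ‖y‖ ≤ r) :
    halfBallBarrier i₀ A r y ≤ (A + 1) * ‖y‖ / r := by
  have hyn : y i₀ ≤ ‖y‖ := y.apply_le_norm i₀
  have h1 : ‖y‖ ^ 2 ≤ r * ‖y‖ := by nlinarith [norm_nonneg y]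
  have h2 : y i₀ * (r - y i₀) ≤ ‖y‖ * r := by nlinarith
  have hnum : ‖y‖ ^ 2 + A * y i₀ * (r - y i₀) ≤ r * ((A + 1) * ‖y‖) := by
    nlinarith [mul_le_mul_of_nonneg_left h2 hA]
  calc halfBallBarrier i₀ A r y ≤ r * ((A + 1) * ‖y‖) / r ^ 2 :=
        div_le_div_of_nonneg_right hnum (sq_nonneg r)
    _ = (A + 1) * ‖y‖ / r := by field_simp

/-- For `A = Λ d + 1` the sum equals `-2 q Λ / r²`. -/
theorem sum_pucci_halfBallBarrier_neg {Λ q : ℝ} (hΛ : 0 < Λ) (hq : 0 < q) (hr : 0 < r) :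
    ∑ i, (Λ * max (2 * (if i = i₀ then q * (1 - (Λ * d + 1)) / r ^ 2 else q / r ^ 2)) 0 +
      1 * min (2 * (if i = i₀ then q * (1 - (Λ * d + 1)) / r ^ 2 else q / r ^ 2)) 0) < 0 := by
  have hneg : 2 * (q * (1 - (Λ * d + 1)) / r ^ 2) ≤ 0 := by
    have : q * (1 - (Λ * d + 1)) ≤ 0 :=
      mul_nonpos_of_nonneg_of_nonpos hq.le (by nlinarith [(Nat.cast_nonneg d : (0 : ℝ) ≤ d)])
    linarith [div_nonpos_of_nonpos_of_nonneg this (sq_nonneg r)]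
  have hpos : 0 ≤ 2 * (q / r ^ 2) := by positivity
  simp only [apply_ite (fun x => Λ * max (2 * x) 0 + 1 * min (2 * x) 0),
    Fin.sum_ite_eq_add_mul, max_eq_right hneg, min_eq_left hneg, max_eq_left hpos,
    min_eq_right hpos]
  have : 2 * (q * (1 - (Λ * d + 1)) / r ^ 2) + (d - 1) * (Λ * (2 * (q / r ^ 2))) =
      -(2 * q * Λ / r ^ 2) := by field_simp; ring
  linarith [show 0 < 2 * q * Λ / r ^ 2 by positivity]

end Barrier

section BoundaryEstimate

variable {d : ℕ} {Λ β δ : ℝ} {i₀ : Fin d} {K : Set (EuclideanSpace ℝ (Fin d))}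
  {u : EuclideanSpace ℝ (Fin d) → ℝ}

theorem le_add_mul_norm_of_le_on_sphere (hΛ : 1 ≤ Λ) (hK : IsOpen K)
    (hKpos : ball 0 1 ∩ K ⊆ {x | 0 < x i₀}) (hu : IsPucciSubsolution 1 Λ (ball 0 1 ∩ K) u)
    {r b m : ℝ} (hr : 0 < r) (hr1 : r ≤ 1) (hbm : b < m)
    (hm : ∀ y ∈ sphere 0 r ∩ K, u y ≤ m)
    (hb : ∀ y ∈ frontier (ball 0 1 ∩ K), ‖y‖ ≤ r → u y ≤ b) :
    ∀ y ∈ ball 0 r ∩ K, u y ≤ b + (m - b) * ((Λ * d + 2) * ‖y‖ / r) := by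
  set q := m - b
  have hq : 0 < q := sub_pos.mpr hbm
  have hA : 0 ≤ Λ * d + 1 := by positivity
  set w := diagQuadratic b (fun i => if i = i₀ then q * (Λ * d + 1) / r else 0)
    (fun i => if i = i₀ then q * (1 - (Λ * d + 1)) / r ^ 2 else q / r ^ 2)
  have hw : ∀ y, w y = b + q * halfBallBarrier i₀ (Λ * d + 1) r y :=
    diagQuadratic_eq_halfBallBarrier hr.ne' b q
  have hΩ1 : ball (0 : EuclideanSpace ℝ (Fin d)) r ∩ K ⊆ ball 0 1 ∩ K :=
    Set.inter_subset_inter_left _ (ball_subset_ball hr1)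
  have hΩ0 : closure (ball 0 r ∩ K) ⊆ {y : EuclideanSpace ℝ (Fin d) | 0 ≤ y i₀} :=
    closure_minimal (fun y hy => show 0 ≤ y i₀ from (hKpos (hΩ1 hy)).le)
      (isClosed_le continuous_const (by fun_prop))
  have hcomp : ∀ y ∈ ball 0 r ∩ K, u y - w y ≤ 0 := by
    refine (isOpen_ball.inter hK).nonpos_of_nonpos_on_frontier
      (isBounded_ball.subset Set.inter_subset_left)
      ((hu.continuousOn.mono (closure_mono hΩ1)).sub continuous_diagQuadratic.continuousOn)
      (fun x hx => ?_) (fun y hy => ?_)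
    · exact (hu.contDiffOn.contDiffAt ((isOpen_ball.inter hK).mem_nhds (hΩ1 hx))
        ).not_isLocalMax_sub_diagQuadratic zero_le_one hΛ (hu.pucciPlus_nonneg x (hΩ1 hx))
        (sum_pucci_halfBallBarrier_neg (by linarith) hq hr)
    have hy0 : 0 ≤ y i₀ := hΩ0 (frontier_subset_closure hy)
    rcases frontier_ball_inter_subset hK hr1 hy with ⟨hyr, hyK⟩ | ⟨hyb, hyr⟩
    · rw [mem_sphere_zero_iff_norm] at hyr
      linarith [hm y ⟨by simpa using hyr, hyK⟩, hw y,
        mul_le_mul_of_nonneg_left (one_le_halfBallBarrier hA hy0 hyr hr.ne') hq.le]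
    · rw [mem_closedBall_zero_iff] at hyr
      linarith [hb y hyb hyr, hw y, mul_nonneg hq.le (halfBallBarrier_nonneg hA hy0 hyr)]
  intro y hy
  have hyr : ‖y‖ ≤ r := (mem_ball_zero_iff.mp hy.1).le
  calc u y ≤ w y := sub_nonpos.mp (hcomp y hy)
    _ = b + q * halfBallBarrier i₀ (Λ * d + 1) r y := hw y
    _ ≤ b + q * ((Λ * d + 1 + 1) * ‖y‖ / r) := by
      gcongr
      exact halfBallBarrier_le hA hr (hKpos (hΩ1 hy)).le hyr
    _ = b + q * ((Λ * d + 2) * ‖y‖ / r) := by ring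

theorem le_rpow_step (hΛ : 1 ≤ Λ) (hK : IsOpen K) (hKpos : ball 0 1 ∩ K ⊆ {x | 0 < x i₀})
    (hu : IsPucciSubsolution 1 Λ (ball 0 1 ∩ K) u)
    (hbdy : ∀ y ∈ frontier (ball 0 1 ∩ K), u y ≤ ‖y‖ ^ β) (hβ : 0 < β) (hδ : 0 < δ)
    (hδ1 : δ < 1) (hδβ : 2 * (Λ * d + 2) * δ ≤ δ ^ β) {ρ : ℝ} (hρ : 0 < ρ) (hρ1 : ρ ≤ 1)
    (hP : ∀ y ∈ K, ‖y‖ ≤ ρ → u y ≤ 2 / δ ^ β * ρ ^ β) :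
    ∀ y ∈ K, ‖y‖ ≤ δ * ρ → u y ≤ 2 / δ ^ β * (δ * ρ) ^ β := by
  intro y hyK hy
  set C₀ := 2 / δ ^ β
  have hδβ0 : 0 < δ ^ β := by positivity
  have hC₀ : C₀ * δ ^ β = 2 := div_mul_cancel₀ 2 hδβ0.ne'
  have hC₀1 : 1 < C₀ := by
    nlinarith [Real.rpow_le_one hδ.le hδ1.le hβ.le]
  have hρβ : 0 < ρ ^ β := by positivity
  have hdecay := le_add_mul_norm_of_le_on_sphere hΛ hK hKpos hu hρ hρ1
    (b := ρ ^ β) (m := C₀ * ρ ^ β) (by nlinarith)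
    (fun z hz => hP z hz.2 (mem_sphere_zero_iff_norm.mp hz.1).le)
    (fun z hz hzρ => (hbdy z hz).trans (Real.rpow_le_rpow (norm_nonneg z) hzρ hβ.le))
    y ⟨mem_ball_zero_iff.mpr (hy.trans_lt (mul_lt_of_lt_one_left hρ hδ1)), hyK⟩
  have hlin : (Λ * d + 2) * ‖y‖ / ρ ≤ δ ^ β / 2 := by
    rw [div_le_iff₀ hρ]
    calc (Λ * d + 2) * ‖y‖ ≤ (Λ * d + 2) * (δ * ρ) := by gcongr
      _ ≤ δ ^ β / 2 * ρ := by nlinarith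
  calc u y ≤ ρ ^ β + (C₀ * ρ ^ β - ρ ^ β) * ((Λ * d + 2) * ‖y‖ / ρ) := hdecay
    _ ≤ ρ ^ β + C₀ * ρ ^ β * (δ ^ β / 2) := by
      gcongr
      nlinarith
    _ = C₀ * (δ * ρ) ^ β := by
      rw [Real.mul_rpow hδ.le hρ.le]; linear_combination (-ρ ^ β / 2) * hC₀

theorem le_rpow_pow_succ (hΛ : 1 ≤ Λ) (hK : IsOpen K) (hKpos : ball 0 1 ∩ K ⊆ {x | 0 < x i₀})
    (hu : IsPucciSubsolution 1 Λ (ball 0 1 ∩ K) u) (hle : ∀ x ∈ ball 0 1 ∩ K, u x ≤ 1)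
    (hbdy : ∀ y ∈ frontier (ball 0 1 ∩ K), u y ≤ ‖y‖ ^ β) (hβ : 0 < β) (hδ : 0 < δ)
    (hδ1 : δ < 1) (hδβ : 2 * (Λ * d + 2) * δ ≤ δ ^ β) (k : ℕ) :
    ∀ y ∈ K, ‖y‖ ≤ δ ^ (k + 1) → u y ≤ 2 / δ ^ β * (δ ^ (k + 1)) ^ β := by
  induction k with
  | zero =>
    intro y hyK hy
    rw [pow_one] at hy ⊢
    rw [div_mul_cancel₀ _ (by positivity)]
    linarith [hle y ⟨mem_ball_zero_iff.mpr (hy.trans_lt hδ1), hyK⟩]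
  | succ k ih =>
    rw [pow_succ' δ (k + 1)]
    exact le_rpow_step hΛ hK hKpos hu hbdy hβ hδ hδ1 hδβ (by positivity)
      (pow_le_one₀ hδ.le hδ1.le) ih

theorem le_mul_norm_rpow (hΛ : 1 ≤ Λ) (hK : IsOpen K) (h0 : (0 : EuclideanSpace ℝ (Fin d)) ∉ K)
    (hKpos : ball 0 1 ∩ K ⊆ {x | 0 < x i₀}) (hu : IsPucciSubsolution 1 Λ (ball 0 1 ∩ K) u)
    (hle : ∀ x ∈ ball 0 1 ∩ K, u x ≤ 1) (hbdy : ∀ y ∈ frontier (ball 0 1 ∩ K), u y ≤ ‖y‖ ^ β)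
    (hβ : 0 < β) (hδ : 0 < δ) (hδ1 : δ < 1) (hδβ : 2 * (Λ * d + 2) * δ ≤ δ ^ β) :
    ∀ x ∈ ball 0 1 ∩ K, u x ≤ 2 / δ ^ β / δ ^ β * ‖x‖ ^ β := by
  intro x hx
  have hx0 : 0 < ‖x‖ := norm_pos_iff.mpr fun h => h0 (h ▸ hx.2)
  obtain ⟨n, hn1, hn2⟩ :=
    exists_nat_pow_near_of_lt_one hx0 (mem_ball_zero_iff.mp hx.1).le hδ hδ1
  have hux : u x ≤ 2 / δ ^ β * (δ ^ n) ^ β := by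
    cases n with
    | zero =>
      rw [pow_zero, Real.one_rpow, mul_one, le_div_iff₀ (by positivity)]
      nlinarith [hle x hx, Real.rpow_pos_of_pos hδ β, Real.rpow_le_one hδ.le hδ1.le hβ.le]
    | succ k => exact le_rpow_pow_succ hΛ hK hKpos hu hle hbdy hβ hδ hδ1 hδβ k x hx.2 hn2
  calc u x ≤ 2 / δ ^ β * (δ ^ n) ^ β := hux
    _ ≤ 2 / δ ^ β * (‖x‖ / δ) ^ β := by
      gcongr
      rw [le_div_iff₀ hδ, ← pow_succ]
      exact hn1.le
    _ = 2 / δ ^ β / δ ^ β * ‖x‖ ^ β := by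
      rw [Real.div_rpow hx0.le hδ.le]; ring

end BoundaryEstimate

/-- Boundary Hölder continuity estimate for subsolutions of the Pucci maximal operator. -/
theorem boundary_holder_continuity (d : ℕ) (hd : 2 ≤ d) (Λ : ℝ) (hΛ : 1 ≤ Λ)
    (β : ℝ) (hβ0 : 0 < β) (hβ1 : β < 1) :
    ∃ C > (0 : ℝ), ∀ K : Set (EuclideanSpace ℝ (Fin d)),
      IsOpen K →
      (0 : EuclideanSpace ℝ (Fin d)) ∈ frontier K →
      (Metric.ball (0 : EuclideanSpace ℝ (Fin d)) 1 ∩ K ⊆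
        {x : EuclideanSpace ℝ (Fin d) | 0 < x ⟨d - 1, by omega⟩}) →
      ∀ u : EuclideanSpace ℝ (Fin d) → ℝ,
        ContinuousOn u (closure (Metric.ball (0 : EuclideanSpace ℝ (Fin d)) 1 ∩ K)) →
        ContDiffOn ℝ 2 u (Metric.ball (0 : EuclideanSpace ℝ (Fin d)) 1 ∩ K) →
        (∀ x ∈ Metric.ball (0 : EuclideanSpace ℝ (Fin d)) 1 ∩ K, u x ≤ 1) →
        (∀ x ∈ Metric.ball (0 : EuclideanSpace ℝ (Fin d)) 1 ∩ K,
          0 ≤ pucciPlus 1 Λ (hessianE u x)) →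
        (∀ x ∈ frontier (Metric.ball (0 : EuclideanSpace ℝ (Fin d)) 1 ∩ K), u x ≤ ‖x‖ ^ β) →
        ∀ x ∈ Metric.ball (0 : EuclideanSpace ℝ (Fin d)) 1 ∩ K, u x ≤ C * ‖x‖ ^ β := by
  obtain ⟨δ, hδ, hδ1, hδβ⟩ :=
    exists_pos_lt_one_mul_le_rpow (c := 2 * (Λ * d + 2)) (by positivity) hβ1
  refine ⟨2 / δ ^ β / δ ^ β, by positivity, ?_⟩
  intro K hK h0K hKpos u hu hu2 hle hsub hbdy
  exact le_mul_norm_rpow hΛ hK (fun h => (hK.frontier_eq ▸ h0K).2 h) hKpos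
    ⟨hu, hu2, hsub⟩ hle hbdy hβ0 hδ hδ1 hδβ
end

section
/- Let β ∈ (0,1) and C₀ ≥ 1, and set M = (2C₀)^{1/(1−β)}. There exists a constant C > 0 depending only on β and C₀ such that: for every nondecreasing function s : (0,1] → [0,∞) satisfying s(r) ≤ (M·r)^β + (C₀/M)·s(M·r) for all r ∈ (0, 1/M], one has s(r) ≤ C·(1 + s(1))·r^β for all r ∈ (0,1]. -/
/-!
Along the geometric scales `r = M⁻¹ ^ k` the normalized quantity `t k = s r / r ^ β` obeys
`t (k + 1) ≤ M ^ β + (C₀ / M) M ^ β t k`, and the choice of `M` makes the contraction factor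
`(C₀ / M) M ^ β` equal to `1 / 2`, so `t` never exceeds `max (t 0) (2 M ^ β)`. Monotonicity of `s`
interpolates between consecutive scales at the cost of one more factor `M ^ β`.
-/

open Real Set

theorem le_max_of_succ_le_add_mul {t : ℕ → ℝ} {A θ : ℝ} (hθ0 : 0 ≤ θ) (hθ1 : θ < 1)
    (ht : ∀ k, t (k + 1) ≤ A + θ * t k) (k : ℕ) : t k ≤ max (t 0) (A / (1 - θ)) := by
  induction k with
  | zero => exact le_max_left _ _
  | succ k ih =>
    have hA : A ≤ (1 - θ) * max (t 0) (A / (1 - θ)) := by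
      rw [← div_le_iff₀' (by linarith)]
      exact le_max_right _ _
    calc t (k + 1) ≤ A + θ * t k := ht k
      _ ≤ A + θ * max (t 0) (A / (1 - θ)) := by gcongr
      _ ≤ max (t 0) (A / (1 - θ)) := by linarith

theorem rpow_inv_pow_eq_rpow_mul_rpow_inv_pow_succ {M : ℝ} (hM : 0 < M) (β : ℝ) (k : ℕ) :
    (M⁻¹ ^ k) ^ β = M ^ β * (M⁻¹ ^ (k + 1)) ^ β := by
  rw [pow_succ, mul_rpow (by positivity) (by positivity), inv_rpow hM.le]
  field_simp

theorem le_max_mul_rpow_of_le_rpow_add_mul {s : ℝ → ℝ} {β c M : ℝ} (hM : 1 ≤ M) (hc : 0 ≤ c)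
    (hθ : c * M ^ β < 1)
    (hstep : ∀ r, 0 < r → r ≤ 1 / M → s r ≤ (M * r) ^ β + c * s (M * r)) (k : ℕ) :
    s (M⁻¹ ^ k) ≤ max (s 1) (M ^ β / (1 - c * M ^ β)) * (M⁻¹ ^ k) ^ β := by
  have hM0 : 0 < M := by linarith
  set t : ℕ → ℝ := fun k => s (M⁻¹ ^ k) / (M⁻¹ ^ k) ^ β
  have hrec : ∀ k, t (k + 1) ≤ M ^ β + c * M ^ β * t k := by
    intro k
    have hle : M⁻¹ ^ (k + 1) ≤ 1 / M := by
      rw [one_div, pow_succ']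
      exact mul_le_of_le_one_right (by positivity)
        (pow_le_one₀ (by positivity) (inv_le_one_of_one_le₀ hM))
    have h := hstep (M⁻¹ ^ (k + 1)) (by positivity) hle
    rw [pow_succ', ← mul_assoc, mul_inv_cancel₀ hM0.ne', one_mul, ← pow_succ'] at h
    simp only [t]
    rw [div_le_iff₀ (by positivity)]
    calc s (M⁻¹ ^ (k + 1)) ≤ (M⁻¹ ^ k) ^ β + c * s (M⁻¹ ^ k) := h
      _ = (M ^ β + c * M ^ β * (s (M⁻¹ ^ k) / (M⁻¹ ^ k) ^ β)) * (M⁻¹ ^ (k + 1)) ^ β := by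
        rw [rpow_inv_pow_eq_rpow_mul_rpow_inv_pow_succ hM0 β k]
        field_simp
  have := le_max_of_succ_le_add_mul (by positivity) hθ hrec k
  simp only [t, pow_zero, one_rpow, div_one] at this
  rwa [div_le_iff₀ (by positivity)] at this

theorem le_mul_rpow_of_le_mul_rpow_inv_pow {s : ℝ → ℝ} {β K M : ℝ} (hM : 1 < M) (hβ : 0 ≤ β)
    (hK : 0 ≤ K) (hmono : MonotoneOn s (Ioc 0 1))
    (hscale : ∀ k : ℕ, s (M⁻¹ ^ k) ≤ K * (M⁻¹ ^ k) ^ β) {r : ℝ} (hr0 : 0 < r) (hr1 : r ≤ 1) :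
    s r ≤ K * M ^ β * r ^ β := by
  have hM0 : 0 < M := by linarith
  obtain ⟨k, hlt, hle⟩ :=
    exists_nat_pow_near_of_lt_one hr0 hr1 (inv_pos.2 hM0) (inv_lt_one_of_one_lt₀ hM)
  calc s r ≤ s (M⁻¹ ^ k) :=
        hmono ⟨hr0, hr1⟩
          ⟨by positivity, pow_le_one₀ (by positivity) (inv_le_one_of_one_le₀ hM.le)⟩ hle
    _ ≤ K * (M⁻¹ ^ k) ^ β := hscale k
    _ = K * M ^ β * (M⁻¹ ^ (k + 1)) ^ β := by
        rw [rpow_inv_pow_eq_rpow_mul_rpow_inv_pow_succ hM0 β k, mul_assoc]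
    _ ≤ K * M ^ β * r ^ β := by gcongr

theorem rpow_one_div_one_sub_rpow_div_self {x β : ℝ} (hx : 0 < x) (hβ : β ≠ 1) :
    (x ^ (1 / (1 - β))) ^ β / x ^ (1 / (1 - β)) = x⁻¹ := by
  have h1β : 1 - β ≠ 0 := sub_ne_zero.2 hβ.symm
  rw [← rpow_mul hx.le, ← rpow_sub hx, ← rpow_neg_one]
  congr 1
  field_simp
  ring

/-- Dyadic iteration yielding a Hölder modulus from a one-step barrier estimate. -/
theorem dyadic_iteration_holder (β C₀ M : ℝ) (hβ0 : 0 < β) (hβ1 : β < 1) (hC₀ : 1 ≤ C₀)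
    (hM : M = (2 * C₀) ^ ((1 : ℝ) / (1 - β))) :
    ∃ C > (0 : ℝ), ∀ s : ℝ → ℝ,
      (∀ r : ℝ, 0 < r → r ≤ 1 → 0 ≤ s r) →
      (∀ r₁ r₂ : ℝ, 0 < r₁ → r₁ ≤ r₂ → r₂ ≤ 1 → s r₁ ≤ s r₂) →
      (∀ r : ℝ, 0 < r → r ≤ 1 / M → s r ≤ (M * r) ^ β + C₀ / M * s (M * r)) →
      ∀ r : ℝ, 0 < r → r ≤ 1 → s r ≤ C * (1 + s 1) * r ^ β := by
  have hM1 : 1 < M := hM ▸ one_lt_rpow (by linarith) (one_div_pos.2 (sub_pos.2 hβ1))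
  have hhalf : C₀ / M * M ^ β = 1 / 2 := by
    rw [div_mul_eq_mul_div, mul_div_assoc, hM,
      rpow_one_div_one_sub_rpow_div_self (by linarith) hβ1.ne]
    field_simp
  have hMβ : 1 ≤ M ^ β := one_le_rpow hM1.le hβ0.le
  refine ⟨2 * M ^ β * M ^ β, by positivity, fun s hnn hmono hstep r hr0 hr1 => ?_⟩
  have hs1 : 0 ≤ s 1 := hnn 1 one_pos le_rfl
  have hscale := le_max_mul_rpow_of_le_rpow_add_mul hM1.le
    (div_nonneg (by linarith) (by linarith)) (by rw [hhalf]; norm_num) hstep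
  rw [hhalf] at hscale
  have hK : max (s 1) (M ^ β / (1 - 1 / 2)) ≤ 2 * M ^ β * (1 + s 1) :=
    max_le (by nlinarith) (by rw [show M ^ β / (1 - 1 / 2) = 2 * M ^ β by ring]; nlinarith)
  calc s r ≤ max (s 1) (M ^ β / (1 - 1 / 2)) * M ^ β * r ^ β :=
        le_mul_rpow_of_le_mul_rpow_inv_pow hM1 hβ0.le (le_max_of_le_left hs1)
          (fun a ha b hb hab => hmono a b ha.1 hab hb.2) hscale hr0 hr1
    _ ≤ 2 * M ^ β * (1 + s 1) * M ^ β * r ^ β := by gcongr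
    _ = 2 * M ^ β * M ^ β * (1 + s 1) * r ^ β := by ring
end

section
/- Let d ≥ 1, Λ ≥ 1, and let F : Sym_d(ℝ) → ℝ be uniformly elliptic with constants 1, Λ. Let η ∈ ℝ^d be a unit vector and ε > 0, and define F_ε(M) = max{ F(M), F(M + ε·(ηᵀMη)·ηηᵀ) }. Then: (a) F_ε is uniformly elliptic with constants 1, Λ(1+ε), i.e. Tr(N) ≤ F_ε(M) − F_ε(M+N) ≤ Λ(1+ε)·Tr(N) for all symmetric M and positive semidefinite N; (b) if F is positively 1-homogeneous (F(tM) = t·F(M) for all t > 0), then so is F_ε; (c) |F_ε(M) − F(M)| ≤ Λ·ε·‖M‖ for all M ∈ Sym_d(ℝ), where ‖·‖ is the operator norm. -/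
open Matrix

/-- `F : Sym_d(ℝ) → ℝ` is uniformly elliptic with constants `0 < lam ≤ Lam`. -/
def UniformlyElliptic (d : ℕ) (lam Lam : ℝ) (F : Matrix (Fin d) (Fin d) ℝ → ℝ) : Prop :=
  ∀ M N : Matrix (Fin d) (Fin d) ℝ, M.IsHermitian → N.PosSemidef →
    lam * N.trace ≤ F M - F (M + N) ∧ F M - F (M + N) ≤ Lam * N.trace

/-- The quadratic form `ηᵀMη = Σᵢⱼ ηᵢ Mᵢⱼ ηⱼ`. -/
def quadForm {d : ℕ} (η : Fin d → ℝ) (M : Matrix (Fin d) (Fin d) ℝ) : ℝ :=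
  ∑ i, ∑ j, η i * M i j * η j

/-- The rank-one matrix `ηηᵀ` with entries `ηᵢηⱼ`. -/
def rankOne {d : ℕ} (η : Fin d → ℝ) : Matrix (Fin d) (Fin d) ℝ :=
  Matrix.of fun i j => η i * η j

/-- The perturbed operator `F_ε(M) = max{F(M), F(M + ε·(ηᵀMη)·ηηᵀ)}`. -/
def Feps {d : ℕ} (F : Matrix (Fin d) (Fin d) ℝ → ℝ) (η : Fin d → ℝ) (ε : ℝ)
    (M : Matrix (Fin d) (Fin d) ℝ) : ℝ :=
  max (F M) (F (M + (ε * quadForm η M) • rankOne η))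

/-- The operator norm of a matrix, acting on Euclidean space. -/
noncomputable def matOpNorm {d : ℕ} (M : Matrix (Fin d) (Fin d) ℝ) : ℝ :=
  ‖Matrix.toEuclideanCLM (𝕜 := ℝ) M‖

/-!
The perturbation `M ↦ M + ε (ηᵀMη) ηηᵀ` is linear, preserves symmetric and positive
semidefinite matrices, and raises the trace of a PSD `N` by `ε ηᵀNη ∈ [0, ε tr N]`. So `F`
composed with it is elliptic with constants `1, Λ(1+ε)`, and a maximum of two operators elliptic
with common constants is again elliptic. For the closeness estimate: if `ηᵀMη ≥ 0` the
perturbation adds a PSD matrix, so the maximum is `F M`; otherwise it subtracts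
`ε |ηᵀMη| ηηᵀ`, which raises `F` by at most `Λ ε |ηᵀMη| ≤ Λ ε ‖M‖`.
-/

section QuadraticForm

variable {d : ℕ} (η : Fin d → ℝ)

lemma quadForm_eq_dotProduct_mulVec (M : Matrix (Fin d) (Fin d) ℝ) :
    quadForm η M = η ⬝ᵥ M *ᵥ η := by
  simp [quadForm, dotProduct, mulVec, Finset.mul_sum, mul_assoc]

lemma quadForm_add (M N : Matrix (Fin d) (Fin d) ℝ) :
    quadForm η (M + N) = quadForm η M + quadForm η N := by
  simp only [quadForm_eq_dotProduct_mulVec, add_mulVec, dotProduct_add]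

lemma quadForm_smul (t : ℝ) (M : Matrix (Fin d) (Fin d) ℝ) :
    quadForm η (t • M) = t * quadForm η M := by
  simp only [quadForm_eq_dotProduct_mulVec, smul_mulVec, dotProduct_smul, smul_eq_mul]

lemma rankOne_eq_vecMulVec : rankOne η = vecMulVec η η := rfl

lemma posSemidef_rankOne : (rankOne η).PosSemidef := by
  simpa [rankOne_eq_vecMulVec] using posSemidef_vecMulVec_self_star η

lemma trace_rankOne : (rankOne η).trace = ∑ i, η i ^ 2 := by
  simp [rankOne_eq_vecMulVec, dotProduct, sq]

variable {η}

lemma Matrix.PosSemidef.quadForm_nonneg {N : Matrix (Fin d) (Fin d) ℝ} (hN : N.PosSemidef) :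
    0 ≤ quadForm η N := by
  simpa [quadForm_eq_dotProduct_mulVec] using hN.dotProduct_mulVec_nonneg η

/-- `tr N - ηᵀNη = tr (P N P)` for the orthogonal projection `P = 1 - ηηᵀ`. -/
lemma Matrix.PosSemidef.quadForm_le_trace (hη : ∑ i, η i ^ 2 = 1) {N : Matrix (Fin d) (Fin d) ℝ}
    (hN : N.PosSemidef) : quadForm η N ≤ N.trace := by
  have hηη : η ⬝ᵥ η = 1 := by simpa [dotProduct, sq] using hη
  set P : Matrix (Fin d) (Fin d) ℝ := 1 - vecMulVec η η
  have hPP : P * P = P := by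
    simp only [P, sub_mul, mul_sub, one_mul, mul_one, vecMulVec_mul_vecMulVec, hηη, one_smul]
    abel
  have hP_conj : Pᴴ = P := by simp [P]
  have hPNP := (hN.conjTranspose_mul_mul_same P).trace_nonneg
  rw [hP_conj, trace_mul_cycle, hPP] at hPNP
  simp only [P, sub_mul, one_mul, trace_sub, vecMulVec_mul, trace_vecMulVec] at hPNP
  rw [quadForm_eq_dotProduct_mulVec, dotProduct_mulVec, dotProduct_comm]
  linarith

lemma abs_quadForm_le_matOpNorm (hη : ∑ i, η i ^ 2 = 1) (M : Matrix (Fin d) (Fin d) ℝ) :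
    |quadForm η M| ≤ matOpNorm M := by
  set x : EuclideanSpace ℝ (Fin d) := WithLp.toLp 2 η
  have hx : ‖x‖ = 1 := by
    simp [x, EuclideanSpace.norm_eq, hη]
  have hquad : quadForm η M = inner ℝ x (toEuclideanCLM (𝕜 := ℝ) M x) := by
    simp [x, quadForm_eq_dotProduct_mulVec, PiLp.inner_apply, dotProduct, mul_comm]
  calc |quadForm η M| ≤ ‖x‖ * ‖toEuclideanCLM (𝕜 := ℝ) M x‖ := by
        rw [hquad]; exact abs_real_inner_le_norm _ _
    _ ≤ ‖x‖ * (matOpNorm M * ‖x‖) := by gcongr; exact ContinuousLinearMap.le_opNorm _ _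
    _ = matOpNorm M := by rw [hx]; ring

end QuadraticForm

section Perturbation

variable {d : ℕ} {η : Fin d → ℝ} {ε : ℝ}

def perturb (η : Fin d → ℝ) (ε : ℝ) (M : Matrix (Fin d) (Fin d) ℝ) : Matrix (Fin d) (Fin d) ℝ :=
  M + (ε * quadForm η M) • rankOne η

lemma Feps_eq_max_perturb (F : Matrix (Fin d) (Fin d) ℝ → ℝ) (M : Matrix (Fin d) (Fin d) ℝ) :
    Feps F η ε M = max (F M) (F (perturb η ε M)) := rfl

lemma perturb_add (M N : Matrix (Fin d) (Fin d) ℝ) :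
    perturb η ε (M + N) = perturb η ε M + perturb η ε N := by
  simp only [perturb, quadForm_add, mul_add, add_smul]
  abel

lemma perturb_smul (t : ℝ) (M : Matrix (Fin d) (Fin d) ℝ) :
    perturb η ε (t • M) = t • perturb η ε M := by
  simp only [perturb, quadForm_smul, smul_add, smul_smul]
  ring_nf

lemma Matrix.IsHermitian.perturb {M : Matrix (Fin d) (Fin d) ℝ} (hM : M.IsHermitian) :
    (perturb η ε M).IsHermitian :=
  hM.add ((posSemidef_rankOne η).isHermitian.smul (.all _))

lemma Matrix.PosSemidef.perturb (hε : 0 ≤ ε) {N : Matrix (Fin d) (Fin d) ℝ} (hN : N.PosSemidef) :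
    (perturb η ε N).PosSemidef :=
  hN.add ((posSemidef_rankOne η).smul (mul_nonneg hε hN.quadForm_nonneg))

lemma trace_perturb (hη : ∑ i, η i ^ 2 = 1) (N : Matrix (Fin d) (Fin d) ℝ) :
    (perturb η ε N).trace = N.trace + ε * quadForm η N := by
  simp [perturb, trace_rankOne, hη]

end Perturbation

namespace UniformlyElliptic

variable {d : ℕ} {lam Lam : ℝ} {F : Matrix (Fin d) (Fin d) ℝ → ℝ}

lemma apply_add_le (hF : UniformlyElliptic d lam Lam F) (hlam : 0 ≤ lam)
    {M N : Matrix (Fin d) (Fin d) ℝ} (hM : M.IsHermitian) (hN : N.PosSemidef) :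
    F (M + N) ≤ F M := by
  linarith [(hF M N hM hN).1, mul_nonneg hlam hN.trace_nonneg]

lemma mono {Lam' : ℝ} (hF : UniformlyElliptic d lam Lam F) (hLam : Lam ≤ Lam') :
    UniformlyElliptic d lam Lam' F := fun M N hM hN =>
  ⟨(hF M N hM hN).1, (hF M N hM hN).2.trans (mul_le_mul_of_nonneg_right hLam hN.trace_nonneg)⟩

lemma max {G : Matrix (Fin d) (Fin d) ℝ → ℝ} (hF : UniformlyElliptic d lam Lam F)
    (hG : UniformlyElliptic d lam Lam G) :
    UniformlyElliptic d lam Lam (fun M => max (F M) (G M)) := by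
  intro M N hM hN
  obtain ⟨hF₁, hF₂⟩ := hF M N hM hN
  obtain ⟨hG₁, hG₂⟩ := hG M N hM hN
  have hlow : Max.max (F (M + N)) (G (M + N)) ≤ Max.max (F M) (G M) - lam * N.trace :=
    max_le (by linarith [le_max_left (F M) (G M)]) (by linarith [le_max_right (F M) (G M)])
  have hup : Max.max (F M) (G M) ≤ Max.max (F (M + N)) (G (M + N)) + Lam * N.trace :=
    max_le (by linarith [le_max_left (F (M + N)) (G (M + N))])
      (by linarith [le_max_right (F (M + N)) (G (M + N))])
  constructor <;> linarith

variable {η : Fin d → ℝ} {ε : ℝ}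

lemma comp_perturb (hF : UniformlyElliptic d lam Lam F) (hlam : 0 ≤ lam) (hLam : 0 ≤ Lam)
    (hη : ∑ i, η i ^ 2 = 1) (hε : 0 ≤ ε) :
    UniformlyElliptic d lam (Lam * (1 + ε)) (fun M => F (perturb η ε M)) := by
  intro M N hM hN
  obtain ⟨hlow, hup⟩ := hF (perturb η ε M) (perturb η ε N) hM.perturb (hN.perturb hε)
  rw [← perturb_add] at hlow hup
  have htr := trace_perturb (ε := ε) hη N
  have htr_ge : N.trace ≤ (perturb η ε N).trace := by
    linarith [mul_nonneg hε (hN.quadForm_nonneg (η := η))]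
  have htr_le : (perturb η ε N).trace ≤ (1 + ε) * N.trace := by
    linarith [mul_le_mul_of_nonneg_left (hN.quadForm_le_trace hη) hε]
  constructor
  · calc lam * N.trace ≤ lam * (perturb η ε N).trace := mul_le_mul_of_nonneg_left htr_ge hlam
      _ ≤ _ := hlow
  · calc _ ≤ Lam * (perturb η ε N).trace := hup
      _ ≤ Lam * ((1 + ε) * N.trace) := mul_le_mul_of_nonneg_left htr_le hLam
      _ = Lam * (1 + ε) * N.trace := by ring

end UniformlyElliptic

section Feps

variable {d : ℕ} {lam Lam : ℝ} {F : Matrix (Fin d) (Fin d) ℝ → ℝ} {η : Fin d → ℝ} {ε : ℝ}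

lemma uniformlyElliptic_Feps (hF : UniformlyElliptic d lam Lam F) (hlam : 0 ≤ lam)
    (hLam : 0 ≤ Lam) (hη : ∑ i, η i ^ 2 = 1) (hε : 0 ≤ ε) :
    UniformlyElliptic d lam (Lam * (1 + ε)) (Feps F η ε) :=
  (hF.mono (le_mul_of_one_le_right hLam (by linarith))).max (hF.comp_perturb hlam hLam hη hε)

lemma Feps_smul (hF : ∀ t : ℝ, 0 < t → ∀ M, F (t • M) = t * F M) {t : ℝ} (ht : 0 < t)
    (M : Matrix (Fin d) (Fin d) ℝ) : Feps F η ε (t • M) = t * Feps F η ε M := by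
  rw [Feps_eq_max_perturb, Feps_eq_max_perturb, perturb_smul, hF t ht, hF t ht,
    mul_max_of_nonneg _ _ ht.le]

lemma abs_Feps_sub_le (hF : UniformlyElliptic d lam Lam F) (hlam : 0 ≤ lam) (hLam : 0 ≤ Lam)
    (hη : ∑ i, η i ^ 2 = 1) (hε : 0 ≤ ε) {M : Matrix (Fin d) (Fin d) ℝ} (hM : M.IsHermitian) :
    |Feps F η ε M - F M| ≤ Lam * ε * |quadForm η M| := by
  rcases le_or_gt 0 (quadForm η M) with hq | hq
  · have hle : F (perturb η ε M) ≤ F M :=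
      hF.apply_add_le hlam hM ((posSemidef_rankOne η).smul (mul_nonneg hε hq))
    rw [Feps_eq_max_perturb, max_eq_left hle, sub_self, abs_zero]
    positivity
  · -- `M` is recovered from `perturb η ε M` by adding the PSD matrix `-ε (ηᵀMη) ηηᵀ`.
    have hc : 0 ≤ -(ε * quadForm η M) := by linarith [mul_nonpos_of_nonneg_of_nonpos hε hq.le]
    have hback : perturb η ε M + (-(ε * quadForm η M)) • rankOne η = M := by
      rw [perturb, add_assoc, ← add_smul, add_neg_cancel, zero_smul, add_zero]
    have hup := (hF (perturb η ε M) _ hM.perturb ((posSemidef_rankOne η).smul hc)).2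
    rw [hback, trace_smul, trace_rankOne, hη, smul_eq_mul, mul_one] at hup
    have hge : F M ≤ Feps F η ε M := le_max_left _ _
    have hle : Feps F η ε M ≤ F M + Lam * (-(ε * quadForm η M)) := by
      rw [Feps_eq_max_perturb]
      exact max_le (le_add_of_nonneg_right (mul_nonneg hLam hc)) (by linarith)
    rw [abs_of_nonneg (sub_nonneg.2 hge), abs_of_neg hq]
    linarith

end Feps

theorem Feps_properties_general (d : ℕ) (Λ : ℝ) (hΛ : 1 ≤ Λ)
    (F : Matrix (Fin d) (Fin d) ℝ → ℝ) (hF : UniformlyElliptic d 1 Λ F)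
    (η : Fin d → ℝ) (hη : ∑ i, η i ^ 2 = 1) (ε : ℝ) (hε : 0 < ε) :
    UniformlyElliptic d 1 (Λ * (1 + ε)) (Feps F η ε) ∧
    ((∀ t : ℝ, 0 < t → ∀ M : Matrix (Fin d) (Fin d) ℝ, F (t • M) = t * F M) →
      ∀ t : ℝ, 0 < t → ∀ M : Matrix (Fin d) (Fin d) ℝ,
        Feps F η ε (t • M) = t * Feps F η ε M) ∧
    (∀ M : Matrix (Fin d) (Fin d) ℝ, M.IsHermitian →
      |Feps F η ε M - F M| ≤ Λ * ε * matOpNorm M) := by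
  have hΛ₀ : 0 ≤ Λ := by linarith
  refine ⟨uniformlyElliptic_Feps hF zero_le_one hΛ₀ hη hε.le,
    fun hhom t ht M => Feps_smul hhom ht M, fun M hM => ?_⟩
  calc |Feps F η ε M - F M| ≤ Λ * ε * |quadForm η M| :=
        abs_Feps_sub_le hF zero_le_one hΛ₀ hη hε.le hM
    _ ≤ Λ * ε * matOpNorm M :=
        mul_le_mul_of_nonneg_left (abs_quadForm_le_matOpNorm hη M) (by positivity)

/-- Properties of the monotone perturbation `F_ε`: ellipticity, positive 1-homogeneity,
and closeness to `F`. -/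
theorem Feps_properties (d : ℕ) (hd : 1 ≤ d) (Λ : ℝ) (hΛ : 1 ≤ Λ)
    (F : Matrix (Fin d) (Fin d) ℝ → ℝ) (hF : UniformlyElliptic d 1 Λ F)
    (η : Fin d → ℝ) (hη : ∑ i, η i ^ 2 = 1) (ε : ℝ) (hε : 0 < ε) :
    UniformlyElliptic d 1 (Λ * (1 + ε)) (Feps F η ε) ∧
    ((∀ t : ℝ, 0 < t → ∀ M : Matrix (Fin d) (Fin d) ℝ, F (t • M) = t * F M) →
      ∀ t : ℝ, 0 < t → ∀ M : Matrix (Fin d) (Fin d) ℝ,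
        Feps F η ε (t • M) = t * Feps F η ε M) ∧
    (∀ M : Matrix (Fin d) (Fin d) ℝ, M.IsHermitian →
      |Feps F η ε M - F M| ≤ Λ * ε * matOpNorm M) :=
  Feps_properties_general d Λ hΛ F hF η hη ε hε
end
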